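/- arXiv:1907.08050 — 6 statements merged into one kernel-verified Lean document; each statement's English description precedes it below -/
import Mathlib

section
/- A (not necessarily finite) poset L is a well separated κ-lattice if and only if it is isomorphic to Pairs(→) for a two-acyclic factorization system (Ш, →, ↠, ↪). If so, (Ш, →, ↠, ↪) is isomorphic to (JIrr^c(L), →_L, ↠_L, ↪_L), and the map x ↦ ({j ∈ JIrr^c(L) : j ≤ x}, κᵈ({m ∈ MIrr^c(L) : m ≥ x})) is an order isomorphism from L to Pairs(→_L), with inverse (X,Y) ↦ ⋁X = ⋀(κ(Y)). -/
namespace SDL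

variable {S : Type*} {L : Type*}

/-- `X^⊥ = {y | x ↛ y for all x ∈ X}` -/
def perpR (r : S → S → Prop) (X : Set S) : Set S := {y | ∀ x ∈ X, ¬ r x y}

/-- `^⊥Y = {x | x ↛ y for all y ∈ Y}` -/
def perpL (r : S → S → Prop) (Y : Set S) : Set S := {x | ∀ y ∈ Y, ¬ r x y}

/-- `(X, Y)` is a maximal orthogonal pair for `r`. -/
def IsMOP (r : S → S → Prop) (X Y : Set S) : Prop := Y = perpR r X ∧ X = perpL r Y

/-- The set of maximal orthogonal pairs. -/
def Pairs (r : S → S → Prop) : Type _ := {p : Set S × Set S // IsMOP r p.1 p.2}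

/-- `Pairs r` is ordered by containment in the first component. -/
instance (r : S → S → Prop) : PartialOrder (Pairs r) where
  le p q := p.val.1 ⊆ q.val.1
  le_refl _ := Set.Subset.rfl
  le_trans _ _ _ h h' := Set.Subset.trans h h'
  le_antisymm p q h h' := by
    apply Subtype.ext
    have h1 : p.val.1 = q.val.1 := subset_antisymm h h'
    have h2 : p.val.2 = q.val.2 := by rw [p.prop.1, q.prop.1, h1]
    exact Prod.ext h1 h2

/-- `x ↠ y` iff for all `z`, `y → z` implies `x → z`. -/
def Onto (r : S → S → Prop) (x y : S) : Prop := ∀ z, r y z → r x z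

/-- `x ↪ y` iff for all `z`, `z → x` implies `z → y`. -/
def Into (r : S → S → Prop) (x y : S) : Prop := ∀ z, r z x → r z y

/-- `Mult ↠ ↪` relates `x` to `z` iff `x ↠ y ↪ z` for some `y`. -/
def Mult (ont inj : S → S → Prop) (x z : S) : Prop := ∃ y, ont x y ∧ inj y z

/-- `(S, r, ont, inj)` is a factorization system. -/
structure IsFactSystem (r ont inj : S → S → Prop) : Prop where
  refl : ∀ x, r x x
  onto_iff : ∀ x y, ont x y ↔ Onto r x y
  into_iff : ∀ x y, inj x y ↔ Into r x y
  mult_iff : ∀ x z, r x z ↔ Mult ont inj x z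

/-- A two-acyclic factorization system. -/
structure IsTwoAcyclicFS (r ont inj : S → S → Prop) extends IsFactSystem r ont inj : Prop where
  onto_antisymm : ∀ x y, ont x y → ont y x → x = y
  into_antisymm : ∀ x y, inj x y → inj y x → x = y
  brick : ∀ x y, ont x y → inj y x → x = y

/-- `T(x) = {x' | x ↠ x'}`. -/
def Tset (ont : S → S → Prop) (x : S) : Set S := {x' | ont x x'}

/-- `F(x) = {x' | x' ↪ x}`. -/
def Fset (inj : S → S → Prop) (x : S) : Set S := {x' | inj x' x}

/-- Restriction of a relation to a subset. -/
def restrictRel (r : S → S → Prop) (D : Set S) : D → D → Prop := fun a b => r a b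

/-- A subset is closed if it equals its closure `^⊥(X^⊥)`. -/
def IsClosedSet (r : S → S → Prop) (X : Set S) : Prop := perpL r (perpR r X) = X

/-- The lattice of closed sets, ordered by containment. -/
abbrev Closeds (r : S → S → Prop) : Type _ := {X : Set S // IsClosedSet r X}

/-- `Del(X, c) = X \ {x ∈ X : x ↠ c}`. -/
def Del (ont : S → S → Prop) (X : Set S) (c : S) : Set S := X \ {x | ont x c}

/-- `Cov(X)`: those `c ∈ X` with `Del(X,c)` closed and the closure of `Del(X,c) ∪ {c}` equal
to `X`. -/
def CovS (r ont : S → S → Prop) (X : Set S) : Set S :=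
  {c | c ∈ X ∧ IsClosedSet r (Del ont X c) ∧ perpL r (perpR r (Del ont X c ∪ {c})) = X}

/-- Direct forcing: `x ⇝ y` iff `x` is `↠`-minimal in `F(y)` or `↪`-maximal in `T(y)`. -/
def Forces (ont inj : S → S → Prop) (x y : S) : Prop :=
  (inj x y ∧ ∀ x', inj x' y → ont x x' → x' = x) ∨
  (ont y x ∧ ∀ x', ont y x' → inj x' x → x' = x)

/-- `down X` for a partial order given as a relation (`r x y` meaning `x ≥ y`). -/
def dnRel (r : S → S → Prop) (X : Set S) : Set S := {y | ∃ x ∈ X, r x y}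

/-- `up X` for a partial order given as a relation (`r x y` meaning `x ≥ y`). -/
def upRel (r : S → S → Prop) (X : Set S) : Set S := {y | ∃ x ∈ X, r y x}

section OrderNotions

variable [PartialOrder L]

/-- Completely join-irreducible: there is `j⁎` such that `x < j ↔ x ≤ j⁎`. -/
def CJIrr (j : L) : Prop := ∃ j', ∀ x : L, x < j ↔ x ≤ j'

/-- Completely meet-irreducible: there is `j^*` such that `x > m ↔ x ≥ m^*`. -/
def CMIrr (m : L) : Prop := ∃ m', ∀ x : L, m < x ↔ m' ≤ x

/-- `k = κ(j)`: `k` is the greatest element of `{y | j ⊓ y = j⁎}`. -/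
def IsKappa (j k : L) : Prop :=
  ∃ j', (∀ x : L, x < j ↔ x ≤ j') ∧ IsGreatest {y : L | IsGLB ({j, y} : Set L) j'} k

/-- `k = κᵈ(m)`: `k` is the least element of `{x | m ⊔ x = m^*}`. -/
def IsKappad (m k : L) : Prop :=
  ∃ m', (∀ x : L, m < x ↔ m' ≤ x) ∧ IsLeast {x : L | IsLUB ({m, x} : Set L) m'} k

/-- `L` is a κ-lattice: complete, meet and join generated by irreducibles, with inverse
bijections `κ` and `κᵈ` between the completely join- and meet-irreducibles. -/
def IsKappaLattice (L : Type*) [PartialOrder L] : Prop :=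
  (∀ s : Set L, ∃ a, IsLUB s a) ∧
  (∀ s : Set L, ∃ a, IsGLB s a) ∧
  (∀ x : L, IsLUB {j : L | CJIrr j ∧ j ≤ x} x) ∧
  (∀ x : L, IsGLB {m : L | CMIrr m ∧ x ≤ m} x) ∧
  (∀ j : L, CJIrr j → ∃ k, IsKappa j k ∧ CMIrr k ∧ IsKappad k j) ∧
  (∀ m : L, CMIrr m → ∃ k, IsKappad m k ∧ CJIrr k ∧ IsKappa k m)

/-- Well separated: `z₁ ≰ z₂` implies some completely join-irreducible `j` has `j ≤ z₁` and
`κ(j) ≥ z₂`. -/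
def WellSeparated (L : Type*) [PartialOrder L] : Prop :=
  ∀ z₁ z₂ : L, ¬ z₁ ≤ z₂ → ∃ j k : L, CJIrr j ∧ IsKappa j k ∧ j ≤ z₁ ∧ z₂ ≤ k

/-- The set of completely join-irreducible elements, as a type. -/
abbrev JIrrC (L : Type*) [PartialOrder L] : Type _ := {j : L // CJIrr j}

/-- `i →_L j` iff `i ≰ κ(j)`. -/
def toL (i j : JIrrC L) : Prop := ∃ k : L, IsKappa (j : L) k ∧ ¬ (i : L) ≤ k

/-- `i ↠_L j` iff `i ≥ j` in `L`. -/
def ontoL (i j : JIrrC L) : Prop := (j : L) ≤ (i : L)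

/-- `i ↪_L j` iff `κ(i) ≥ κ(j)` in `L`. -/
def intoL (i j : JIrrC L) : Prop :=
  ∃ ki kj : L, IsKappa (i : L) ki ∧ IsKappa (j : L) kj ∧ kj ≤ ki

/-- A poset is a semidistributive lattice (order-theoretically): binary joins and meets exist,
and both semidistributive laws hold. -/
def IsSDLattice (L : Type*) [PartialOrder L] : Prop :=
  (∀ x y : L, ∃ s, IsLUB ({x, y} : Set L) s) ∧
  (∀ x y : L, ∃ s, IsGLB ({x, y} : Set L) s) ∧
  (∀ x y z sxy sxz myz : L, IsLUB ({x, y} : Set L) sxy → IsLUB ({x, z} : Set L) sxz →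
    sxy = sxz → IsGLB ({y, z} : Set L) myz → IsLUB ({x, myz} : Set L) sxy) ∧
  (∀ x y z mxy mxz syz : L, IsGLB ({x, y} : Set L) mxy → IsGLB ({x, z} : Set L) mxz →
    mxy = mxz → IsLUB ({y, z} : Set L) syz → IsGLB ({x, syz} : Set L) mxy)

/-- `s` is the canonical join representation of `x`. -/
def IsCanonicalJoinRep (s : Set L) (x : L) : Prop :=
  IsLUB s x ∧ (∀ s' : Set L, IsLUB s' x → ∀ a ∈ s, ∃ b ∈ s', a ≤ b) ∧
  IsAntichain (· ≤ ·) s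

end OrderNotions

/-- Join semidistributivity. -/
def JoinSD (L : Type*) [Lattice L] : Prop :=
  ∀ x y z : L, x ⊔ y = x ⊔ z → x ⊔ (y ⊓ z) = x ⊔ y

/-- Meet semidistributivity. -/
def MeetSD (L : Type*) [Lattice L] : Prop :=
  ∀ x y z : L, x ⊓ y = x ⊓ z → x ⊓ (y ⊔ z) = x ⊓ y

/-- Complete join semidistributivity. -/
def CompletelyJoinSD (L : Type*) [CompleteLattice L] : Prop :=
  ∀ (X : Set L) (y z : L), X.Nonempty → (∀ x ∈ X, x ⊔ y = z) → sInf X ⊔ y = z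

/-- Complete meet semidistributivity. -/
def CompletelyMeetSD (L : Type*) [CompleteLattice L] : Prop :=
  ∀ (X : Set L) (y z : L), X.Nonempty → (∀ x ∈ X, x ⊓ y = z) → sSup X ⊓ y = z

end SDL

/-!
Elements of `Pairs(→)` are detected by the irreducible pairs `j(x) = ^⊥({x}^⊥)` and
`m(x) = ({x}^⊥)^⊥`: `x ∈ X` iff `j(x) ≤ (X, Y)` and `x ∈ Y` iff `(X, Y) ≤ m(x)`, while
`j(x) ≤ m(y)` iff `x ↛ y`, `j(y) ≤ j(x)` iff `x ↠ y` and `m(y) ≤ m(x)` iff `x ↪ y`.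
The brick condition says that the only `z` with `x ↠ z → x` is `x` itself, which makes `j(x)`
completely join-irreducible with `j(x)_* = j(x) ∧ m(x)`, and factoring `x → u` as
`x ↠ n ↪ u` shows `κ(j(x)) = m(x)`. Conversely, in a well separated κ-lattice `L` join
generation and well separation say that `x ≤ y` can be tested both on the `j ≤ x` and on the
`κ(j) ≥ y`; this turns `(JIrr^c(L), →_L, ↠_L, ↪_L)` into a two-acyclic factorization system and
`x ↦ ({j ≤ x}, {j | x ≤ κ(j)})` into an isomorphism onto `Pairs(→_L)`.
-/

namespace SDL

variable {S : Type*} {r : S → S → Prop}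

section Polarity

theorem subset_perpL_iff {X Y : Set S} : X ⊆ perpL r Y ↔ Y ⊆ perpR r X :=
  ⟨fun h y hy _ hx => h hx y hy, fun h _ hx _ hy => h hy _ hx⟩

theorem perpR_perpL_perpR (X : Set S) : perpR r (perpL r (perpR r X)) = perpR r X :=
  Set.Subset.antisymm (fun _ hy x hx => hy x (subset_perpL_iff.2 subset_rfl hx))
    (subset_perpL_iff.1 subset_rfl)

theorem perpL_perpR_perpL (Y : Set S) : perpL r (perpR r (perpL r Y)) = perpL r Y :=
  Set.Subset.antisymm (fun _ hx y hy => hx y (subset_perpL_iff.1 subset_rfl hy))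
    (subset_perpL_iff.2 subset_rfl)

namespace Pairs

theorem snd_eq (p : Pairs r) : p.val.2 = perpR r p.val.1 := p.prop.1

theorem fst_eq (p : Pairs r) : p.val.1 = perpL r p.val.2 := p.prop.2

theorem le_def {p q : Pairs r} : p ≤ q ↔ p.val.1 ⊆ q.val.1 := Iff.rfl

theorem le_iff_snd_subset {p q : Pairs r} : p ≤ q ↔ q.val.2 ⊆ p.val.2 := by
  rw [le_def, q.fst_eq, subset_perpL_iff, ← p.snd_eq]

theorem not_rel {p : Pairs r} {x y : S} (hx : x ∈ p.val.1) (hy : y ∈ p.val.2) : ¬ r x y := by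
  rw [p.snd_eq] at hy
  exact hy x hx

def ofFst (X : Set S) : Pairs r :=
  ⟨(perpL r (perpR r X), perpR r X), (perpR_perpL_perpR X).symm, rfl⟩

def ofSnd (Y : Set S) : Pairs r :=
  ⟨(perpL r Y, perpR r (perpL r Y)), rfl, (perpL_perpR_perpL Y).symm⟩

theorem ofFst_le_iff {X : Set S} {p : Pairs r} : ofFst X ≤ p ↔ X ⊆ p.val.1 := by
  rw [le_iff_snd_subset, p.fst_eq]
  exact subset_perpL_iff.symm

theorem le_ofSnd_iff {Y : Set S} {p : Pairs r} : p ≤ ofSnd Y ↔ Y ⊆ p.val.2 := by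
  rw [le_def, p.snd_eq]
  exact subset_perpL_iff

theorem isLUB_ofFst_iUnion (A : Set (Pairs r)) : IsLUB A (ofFst (⋃ p ∈ A, p.val.1)) :=
  isLUB_iff_le_iff.2 fun q => by
    rw [ofFst_le_iff, Set.iUnion₂_subset_iff]
    rfl

noncomputable instance : CompleteLattice (Pairs r) :=
  @completeLatticeOfSup _ _ ⟨fun A => ofFst (⋃ p ∈ A, p.val.1)⟩ isLUB_ofFst_iUnion

end Pairs

end Polarity

section Irreducibles

/-- `(T(x), {y | x ↛ y})` -/
def jpair (r : S → S → Prop) (x : S) : Pairs r := Pairs.ofFst {x}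

/-- `({y | y ↛ x}, F(x))` -/
def mpair (r : S → S → Prop) (x : S) : Pairs r := Pairs.ofSnd {x}

theorem jpair_le_iff {x : S} {p : Pairs r} : jpair r x ≤ p ↔ x ∈ p.val.1 :=
  Pairs.ofFst_le_iff.trans Set.singleton_subset_iff

theorem le_mpair_iff {y : S} {p : Pairs r} : p ≤ mpair r y ↔ y ∈ p.val.2 :=
  Pairs.le_ofSnd_iff.trans Set.singleton_subset_iff

theorem jpair_le_mpair_iff {x y : S} : jpair r x ≤ mpair r y ↔ ¬ r x y := by
  rw [le_mpair_iff]
  simp [jpair, Pairs.ofFst, perpR]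

theorem jpair_le_jpair_iff {x y : S} : jpair r y ≤ jpair r x ↔ Onto r x y := by
  rw [jpair_le_iff]
  simp [jpair, Pairs.ofFst, perpR, perpL, Onto, not_imp_not]

theorem mpair_le_mpair_iff {x y : S} : mpair r y ≤ mpair r x ↔ Into r x y := by
  rw [le_mpair_iff]
  simp [mpair, Pairs.ofSnd, perpR, perpL, Into, not_imp_not]

theorem exists_jpair_le_of_not_le {p q : Pairs r} (h : ¬ p ≤ q) :
    ∃ x, jpair r x ≤ p ∧ ¬ jpair r x ≤ q := by
  simp only [jpair_le_iff]
  exact Set.not_subset.1 h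

theorem exists_le_mpair_of_not_le {p q : Pairs r} (h : ¬ p ≤ q) :
    ∃ y, q ≤ mpair r y ∧ ¬ p ≤ mpair r y := by
  rw [Pairs.le_iff_snd_subset] at h
  simp only [le_mpair_iff]
  exact Set.not_subset.1 h

theorem exists_le_mpair_of_not_jpair_le {x : S} {p : Pairs r} (h : ¬ jpair r x ≤ p) :
    ∃ y, p ≤ mpair r y ∧ r x y := by
  rw [jpair_le_iff, p.fst_eq] at h
  simpa [perpL, le_mpair_iff] using h

theorem exists_jpair_le_of_not_le_mpair {y : S} {p : Pairs r} (h : ¬ p ≤ mpair r y) :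
    ∃ x, jpair r x ≤ p ∧ r x y := by
  rw [le_mpair_iff, p.snd_eq] at h
  simpa [perpR, jpair_le_iff] using h

theorem exists_jpair_eq_of_cjirr {p : Pairs r} (h : CJIrr p) : ∃ x, jpair r x = p := by
  obtain ⟨p', hp'⟩ := h
  obtain ⟨x, hxp, hxp'⟩ := exists_jpair_le_of_not_le ((hp' p').2 le_rfl).not_ge
  exact ⟨x, hxp.eq_of_not_lt fun hlt => hxp' ((hp' _).1 hlt)⟩

theorem exists_mpair_eq_of_cmirr {p : Pairs r} (h : CMIrr p) : ∃ y, mpair r y = p := by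
  obtain ⟨p', hp'⟩ := h
  obtain ⟨y, hpy, hp'y⟩ := exists_le_mpair_of_not_le ((hp' p').2 le_rfl).not_ge
  exact ⟨y, (hpy.eq_of_not_lt fun hlt => hp'y ((hp' _).1 hlt)).symm⟩

end Irreducibles

theorem IsFactSystem.eq_onto_into {ont inj : S → S → Prop}
    (h : IsFactSystem r ont inj) : ont = Onto r ∧ inj = Into r :=
  ⟨funext₂ fun x y => propext (h.onto_iff x y), funext₂ fun x y => propext (h.into_iff x y)⟩

section TwoAcyclic

variable (hFS : IsTwoAcyclicFS r (Onto r) (Into r))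
include hFS

theorem eq_of_onto_of_rel {x z : S} (h : Onto r x z) (h' : r z x) : z = x := by
  obtain ⟨k, hzk, hkx⟩ := (hFS.mult_iff z x).1 h'
  obtain rfl : x = k := hFS.brick x k (fun w hw => h w (hzk w hw)) hkx
  exact hFS.onto_antisymm z x hzk h

theorem eq_of_into_of_rel {x z : S} (h : Into r z x) (h' : r x z) : z = x := by
  obtain ⟨k, hxk, hkz⟩ := (hFS.mult_iff x z).1 h'
  obtain rfl : x = k := hFS.brick x k hxk (fun w hw => h w (hkz w hw))
  exact hFS.into_antisymm z x h hkz

theorem jpair_injective : Function.Injective (jpair r) := fun x y h =>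
  hFS.onto_antisymm x y (jpair_le_jpair_iff.1 h.ge) (jpair_le_jpair_iff.1 h.le)

theorem lt_jpair_iff (x : S) {p : Pairs r} : p < jpair r x ↔ p ≤ jpair r x ⊓ mpair r x := by
  rw [le_inf_iff]
  constructor
  · intro hlt
    refine ⟨hlt.le, ?_⟩
    by_contra hpx
    obtain ⟨z, hzp, hzx⟩ := exists_jpair_le_of_not_le_mpair hpx
    obtain rfl := eq_of_onto_of_rel hFS (jpair_le_jpair_iff.1 (hzp.trans hlt.le)) hzx
    exact hlt.not_ge hzp
  · rintro ⟨hle, hm⟩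
    exact hle.lt_of_ne fun h => jpair_le_mpair_iff.1 (h ▸ hm) (hFS.refl x)

theorem mpair_lt_iff (x : S) {p : Pairs r} : mpair r x < p ↔ mpair r x ⊔ jpair r x ≤ p := by
  rw [sup_le_iff]
  constructor
  · intro hlt
    refine ⟨hlt.le, ?_⟩
    by_contra hxp
    obtain ⟨z, hpz, hxz⟩ := exists_le_mpair_of_not_jpair_le hxp
    obtain rfl := eq_of_into_of_rel hFS (mpair_le_mpair_iff.1 (hlt.le.trans hpz)) hxz
    exact hlt.not_ge hpz
  · rintro ⟨hle, hj⟩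
    exact hle.lt_of_ne fun h => jpair_le_mpair_iff.1 (h ▸ hj) (hFS.refl x)

theorem cjirr_jpair (x : S) : CJIrr (jpair r x) := ⟨_, fun _ => lt_jpair_iff hFS x⟩

theorem cmirr_mpair (x : S) : CMIrr (mpair r x) := ⟨_, fun _ => mpair_lt_iff hFS x⟩

theorem isKappa_jpair (x : S) : IsKappa (jpair r x) (mpair r x) := by
  refine ⟨_, fun _ => lt_jpair_iff hFS x, isGLB_pair, fun y hy => ?_⟩
  have hmeet : jpair r x ⊓ mpair r x ≤ y := hy.1 (by simp)
  have hxy : ¬ jpair r x ≤ y := fun h =>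
    jpair_le_mpair_iff.1 ((hy.2 (by simp [h])).trans inf_le_right) (hFS.refl x)
  obtain ⟨u, hyu, hxu⟩ := exists_le_mpair_of_not_jpair_le hxy
  obtain ⟨n, hxn, hnu⟩ := (hFS.mult_iff x u).1 hxu
  by_cases hnx : r n x
  · obtain rfl := eq_of_onto_of_rel hFS hxn hnx
    exact hyu.trans (mpair_le_mpair_iff.2 hnu)
  · have hny : jpair r n ≤ y :=
      (le_inf (jpair_le_jpair_iff.2 hxn) (jpair_le_mpair_iff.2 hnx)).trans hmeet
    exact absurd (hnu n (hFS.refl n)) (jpair_le_mpair_iff.1 (hny.trans hyu))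

theorem isKappad_mpair (x : S) : IsKappad (mpair r x) (jpair r x) := by
  refine ⟨_, fun _ => mpair_lt_iff hFS x, isLUB_pair, fun y hy => ?_⟩
  have hjoin : y ≤ mpair r x ⊔ jpair r x := hy.1 (by simp)
  have hyx : ¬ y ≤ mpair r x := fun h =>
    jpair_le_mpair_iff.1 (le_sup_right.trans (hy.2 (by simp [h]))) (hFS.refl x)
  obtain ⟨u, huy, hux⟩ := exists_jpair_le_of_not_le_mpair hyx
  obtain ⟨n, hun, hnx⟩ := (hFS.mult_iff u x).1 hux
  by_cases hxn : r x n
  · obtain rfl := eq_of_into_of_rel hFS hnx hxn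
    exact (jpair_le_jpair_iff.2 hun).trans huy
  · have hyn : y ≤ mpair r n :=
      hjoin.trans (sup_le (mpair_le_mpair_iff.2 hnx) (jpair_le_mpair_iff.2 hxn))
    exact absurd (hun n (hFS.refl n)) (jpair_le_mpair_iff.1 (huy.trans hyn))

theorem isKappaLattice_pairs : IsKappaLattice (Pairs r) := by
  refine ⟨fun A => ⟨_, isLUB_sSup A⟩, fun A => ⟨_, isGLB_sInf A⟩, fun p => ?_, fun p => ?_,
    fun j hj => ?_, fun m hm => ?_⟩
  · refine ⟨fun _ hj => hj.2, fun q hq => Pairs.le_def.2 fun x hx => ?_⟩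
    exact jpair_le_iff.1 (hq ⟨cjirr_jpair hFS x, jpair_le_iff.2 hx⟩)
  · refine ⟨fun _ hm => hm.2, fun q hq => Pairs.le_iff_snd_subset.2 fun y hy => ?_⟩
    exact le_mpair_iff.1 (hq ⟨cmirr_mpair hFS y, le_mpair_iff.2 hy⟩)
  · obtain ⟨x, rfl⟩ := exists_jpair_eq_of_cjirr hj
    exact ⟨_, isKappa_jpair hFS x, cmirr_mpair hFS x, isKappad_mpair hFS x⟩
  · obtain ⟨x, rfl⟩ := exists_mpair_eq_of_cmirr hm
    exact ⟨_, isKappad_mpair hFS x, cjirr_jpair hFS x, isKappa_jpair hFS x⟩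

theorem wellSeparated_pairs : WellSeparated (Pairs r) := by
  intro p q hpq
  obtain ⟨z, hzp, hzq⟩ := exists_jpair_le_of_not_le hpq
  obtain ⟨u, hqu, hzu⟩ := exists_le_mpair_of_not_jpair_le hzq
  obtain ⟨m, hzm, hmu⟩ := (hFS.mult_iff z u).1 hzu
  exact ⟨_, _, cjirr_jpair hFS m, isKappa_jpair hFS m, (jpair_le_jpair_iff.2 hzm).trans hzp,
    hqu.trans (mpair_le_mpair_iff.2 hmu)⟩

end TwoAcyclic

section OrderIso

variable {L M : Type*} [PartialOrder L] [PartialOrder M] (f : L ≃o M)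

theorem cjirr_map_iff {j : L} : CJIrr (f j) ↔ CJIrr j := by
  simp only [CJIrr, f.surjective.exists, f.surjective.forall, f.lt_iff_lt, f.le_iff_le]

theorem cmirr_map_iff {m : L} : CMIrr (f m) ↔ CMIrr m := by
  simp only [CMIrr, f.surjective.exists, f.surjective.forall, f.lt_iff_lt, f.le_iff_le]

theorem isKappa_map_iff {j k : L} : IsKappa (f j) (f k) ↔ IsKappa j k := by
  simp only [IsKappa, IsGreatest, upperBounds, Set.mem_ofPred_eq, f.surjective.exists,
    f.surjective.forall, f.lt_iff_lt, f.le_iff_le, ← Set.image_pair, f.isGLB_image']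

theorem isKappad_map_iff {m k : L} : IsKappad (f m) (f k) ↔ IsKappad m k := by
  simp only [IsKappad, IsLeast, lowerBounds, Set.mem_ofPred_eq, f.surjective.exists,
    f.surjective.forall, f.lt_iff_lt, f.le_iff_le, ← Set.image_pair, f.isLUB_image']

include f in
theorem IsKappaLattice.of_orderIso (h : IsKappaLattice M) : IsKappaLattice L := by
  obtain ⟨hsup, hinf, hjgen, hmgen, hκ, hκd⟩ := h
  refine ⟨fun s => ?_, fun s => ?_, fun x => ?_, fun x => ?_, fun j hj => ?_, fun m hm => ?_⟩
  · obtain ⟨a, ha⟩ := hsup (f '' s)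
    exact ⟨f.symm a, f.isLUB_image.1 ha⟩
  · obtain ⟨a, ha⟩ := hinf (f '' s)
    exact ⟨f.symm a, f.isGLB_image.1 ha⟩
  · have hpre : {j | CJIrr j ∧ j ≤ x} = f ⁻¹' {j | CJIrr j ∧ j ≤ f x} := by
      ext; simp [cjirr_map_iff]
    rw [hpre, f.isLUB_preimage]
    exact hjgen (f x)
  · have hpre : {m | CMIrr m ∧ x ≤ m} = f ⁻¹' {m | CMIrr m ∧ f x ≤ m} := by
      ext; simp [cmirr_map_iff]
    rw [hpre, f.isGLB_preimage]
    exact hmgen (f x)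
  · obtain ⟨k, hk⟩ := hκ (f j) ((cjirr_map_iff f).2 hj)
    obtain ⟨k, rfl⟩ := f.surjective k
    exact ⟨k, by simpa only [isKappa_map_iff, cmirr_map_iff, isKappad_map_iff] using hk⟩
  · obtain ⟨k, hk⟩ := hκd (f m) ((cmirr_map_iff f).2 hm)
    obtain ⟨k, rfl⟩ := f.surjective k
    exact ⟨k, by simpa only [isKappa_map_iff, cjirr_map_iff, isKappad_map_iff] using hk⟩

include f in
theorem WellSeparated.of_orderIso (h : WellSeparated M) : WellSeparated L := by
  intro z₁ z₂ hz
  obtain ⟨j, k, hj, hk, hjz, hzk⟩ := h (f z₁) (f z₂) (by rwa [f.le_iff_le])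
  obtain ⟨j, rfl⟩ := f.surjective j
  obtain ⟨k, rfl⟩ := f.surjective k
  exact ⟨j, k, (cjirr_map_iff f).1 hj, (isKappa_map_iff f).1 hk, f.le_iff_le.1 hjz,
    f.le_iff_le.1 hzk⟩

end OrderIso

section KappaLattice

variable {L : Type*} [PartialOrder L]

theorem isKappa_unique {j k k' : L} (h : IsKappa j k) (h' : IsKappa j k') : k = k' := by
  obtain ⟨a, ha, hk⟩ := h
  obtain ⟨b, hb, hk'⟩ := h'
  obtain rfl : a = b := le_antisymm ((hb a).1 ((ha a).2 le_rfl)) ((ha b).1 ((hb b).2 le_rfl))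
  exact hk.unique hk'

theorem isKappad_unique {m k k' : L} (h : IsKappad m k) (h' : IsKappad m k') : k = k' := by
  obtain ⟨a, ha, hk⟩ := h
  obtain ⟨b, hb, hk'⟩ := h'
  obtain rfl : a = b := le_antisymm ((ha b).1 ((hb b).2 le_rfl)) ((hb a).1 ((ha a).2 le_rfl))
  exact hk.unique hk'

theorem IsKappa.not_le {j k : L} (h : IsKappa j k) : ¬ j ≤ k := by
  obtain ⟨j', hj', hk, -⟩ := h
  intro hjk
  exact ((hj' j').2 le_rfl).not_ge (hk.2 (by simp [hjk]))

theorem IsKappa.le_of_lt {i j k : L} (h : IsKappa j k) (hij : i < j) : i ≤ k := by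
  obtain ⟨j', hj', -, hk⟩ := h
  have hj'j : j' < j := (hj' j').2 le_rfl
  exact ((hj' i).1 hij).trans (hk ⟨by simp [hj'j.le], fun _ hz => hz (by simp)⟩)

theorem toL_iff_of_isKappa {i j : JIrrC L} {k : L} (h : IsKappa (j : L) k) :
    toL i j ↔ ¬ (i : L) ≤ k :=
  ⟨fun ⟨_, hk', hi⟩ => isKappa_unique hk' h ▸ hi, fun hi => ⟨k, h, hi⟩⟩

theorem intoL_iff_of_isKappa {i j : JIrrC L} {ki kj : L} (hi : IsKappa (i : L) ki)
    (hj : IsKappa (j : L) kj) : intoL i j ↔ kj ≤ ki :=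
  ⟨fun ⟨_, _, hi', hj', h⟩ => isKappa_unique hi' hi ▸ isKappa_unique hj' hj ▸ h,
    fun h => ⟨ki, kj, hi, hj, h⟩⟩

theorem le_iff_forall_cjirr_le (hK : IsKappaLattice L) {x y : L} :
    x ≤ y ↔ ∀ j : JIrrC L, (j : L) ≤ x → (j : L) ≤ y :=
  ⟨fun h _ hj => hj.trans h, fun h => (hK.2.2.1 x).2 fun j hj => h ⟨j, hj.1⟩ hj.2⟩

theorem isLUB_image_val_setOf_le (hK : IsKappaLattice L) (x : L) :
    IsLUB (Subtype.val '' {j : JIrrC L | (j : L) ≤ x}) x := by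
  refine ⟨?_, fun z hz => (le_iff_forall_cjirr_le hK).2 fun j hj => hz ⟨j, hj, rfl⟩⟩
  rintro _ ⟨j, hj, rfl⟩
  exact hj

variable (hK : IsKappaLattice L)

/-- The map `κ : JIrr^c(L) → MIrr^c(L)`. -/
noncomputable def kap (j : JIrrC L) : L := (hK.2.2.2.2.1 j j.2).choose

theorem isKappa_kap (j : JIrrC L) : IsKappa (j : L) (kap hK j) :=
  (hK.2.2.2.2.1 j j.2).choose_spec.1

theorem cmirr_kap (j : JIrrC L) : CMIrr (kap hK j) := (hK.2.2.2.2.1 j j.2).choose_spec.2.1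

theorem isKappad_kap (j : JIrrC L) : IsKappad (kap hK j) (j : L) :=
  (hK.2.2.2.2.1 j j.2).choose_spec.2.2

theorem kap_eq_of_isKappa {j : JIrrC L} {k : L} (h : IsKappa (j : L) k) : kap hK j = k :=
  isKappa_unique (isKappa_kap hK j) h

theorem toL_iff {i j : JIrrC L} : toL i j ↔ ¬ (i : L) ≤ kap hK j :=
  toL_iff_of_isKappa (isKappa_kap hK j)

theorem intoL_iff {i j : JIrrC L} : intoL i j ↔ kap hK j ≤ kap hK i :=
  intoL_iff_of_isKappa (isKappa_kap hK i) (isKappa_kap hK j)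

theorem le_kap_iff_exists_isKappad {x : L} {j : JIrrC L} :
    x ≤ kap hK j ↔ ∃ m : L, CMIrr m ∧ x ≤ m ∧ IsKappad m (j : L) := by
  refine ⟨fun h => ⟨kap hK j, cmirr_kap hK j, h, isKappad_kap hK j⟩, ?_⟩
  rintro ⟨m, hm, hxm, hmj⟩
  obtain ⟨k, hk, -, hkm⟩ := hK.2.2.2.2.2 m hm
  obtain rfl := isKappad_unique hk hmj
  rwa [kap_eq_of_isKappa hK hkm]

theorem perpR_setOf_le (x : L) :
    perpR toL {j : JIrrC L | (j : L) ≤ x} = {j : JIrrC L | x ≤ kap hK j} := by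
  ext y
  simp only [perpR, Set.mem_ofPred_eq, toL_iff hK, not_not]
  exact (le_iff_forall_cjirr_le hK).symm

variable (hW : WellSeparated L)
include hK hW

theorem exists_le_kap_of_not_le {x y : L} (h : ¬ x ≤ y) :
    ∃ j : JIrrC L, (j : L) ≤ x ∧ y ≤ kap hK j := by
  obtain ⟨j, k, hj, hk, hjx, hyk⟩ := hW x y h
  exact ⟨⟨j, hj⟩, hjx, kap_eq_of_isKappa hK (j := ⟨j, hj⟩) hk ▸ hyk⟩

theorem le_iff_forall_le_kap {x y : L} : x ≤ y ↔ ∀ j, y ≤ kap hK j → x ≤ kap hK j := by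
  refine ⟨fun h _ hj => h.trans hj, fun h => by_contra fun hxy => ?_⟩
  obtain ⟨j, hjx, hyj⟩ := exists_le_kap_of_not_le hK hW hxy
  exact (isKappa_kap hK j).not_le (hjx.trans (h j hyj))

theorem isGLB_setOf_isKappa (x : L) :
    IsGLB {k : L | ∃ j ∈ {j : JIrrC L | x ≤ kap hK j}, IsKappa (j : L) k} x := by
  refine ⟨?_, fun z hz => (le_iff_forall_le_kap hK hW).2 fun j hj => hz ⟨j, hj, isKappa_kap hK j⟩⟩
  rintro _ ⟨j, hj, hk⟩
  rwa [← kap_eq_of_isKappa hK hk]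

theorem isTwoAcyclicFS_toL : IsTwoAcyclicFS (toL (L := L)) ontoL intoL where
  refl j := (toL_iff hK).2 (isKappa_kap hK j).not_le
  onto_iff i j := by
    simp only [Onto, toL_iff hK, not_imp_not]
    exact le_iff_forall_le_kap hK hW
  into_iff i j := by
    simp only [Into, intoL_iff hK, toL_iff hK, not_imp_not]
    exact le_iff_forall_cjirr_le hK
  mult_iff i k := by
    simp only [Mult, ontoL, intoL_iff hK, toL_iff hK]
    refine ⟨exists_le_kap_of_not_le hK hW, fun ⟨j, hji, hkj⟩ hik => ?_⟩
    exact (isKappa_kap hK j).not_le (hji.trans (hik.trans hkj))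
  onto_antisymm i j h h' := Subtype.ext (le_antisymm h' h)
  into_antisymm i j h h' := by
    rw [intoL_iff hK] at h h'
    have hij := isKappad_kap hK i
    rw [le_antisymm h' h] at hij
    exact Subtype.ext (isKappad_unique hij (isKappad_kap hK j))
  brick i j h h' := by
    refine (Subtype.ext (eq_of_le_of_not_lt h fun hji => ?_)).symm
    exact (isKappa_kap hK j).not_le
      (((isKappa_kap hK i).le_of_lt hji).trans ((intoL_iff hK).1 h'))

theorem perpL_setOf_le_kap (x : L) :
    perpL toL {j : JIrrC L | x ≤ kap hK j} = {j : JIrrC L | (j : L) ≤ x} := by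
  ext i
  simp only [perpL, Set.mem_ofPred_eq, toL_iff hK, not_not]
  exact (le_iff_forall_le_kap hK hW).symm

def pairOf (x : L) : Pairs (toL (L := L)) :=
  ⟨({j | (j : L) ≤ x}, {j | x ≤ kap hK j}),
    (perpR_setOf_le hK x).symm, (perpL_setOf_le_kap hK hW x).symm⟩

theorem pairOf_le_pairOf_iff {x y : L} : pairOf hK hW x ≤ pairOf hK hW y ↔ x ≤ y :=
  (le_iff_forall_cjirr_le hK).symm

theorem pairOf_surjective : Function.Surjective (pairOf hK hW) := by
  intro p
  obtain ⟨x, hx⟩ := hK.1 (Subtype.val '' p.val.1)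
  refine ⟨x, le_antisymm (Pairs.le_iff_snd_subset.2 fun y hy => ?_)
    fun j hj => hx.1 ⟨j, hj, rfl⟩⟩
  refine hx.2 ?_
  rintro _ ⟨i, hi, rfl⟩
  exact not_not.1 (mt (toL_iff hK).2 (Pairs.not_rel hi hy))

noncomputable def toPairs : L ≃o Pairs (toL (L := L)) :=
  OrderIso.ofSurjective (OrderEmbedding.ofMapLEIff _ fun _ _ => pairOf_le_pairOf_iff hK hW)
    (pairOf_surjective hK hW)

end KappaLattice

theorem exists_equiv_jirrC_of_orderIso {L : Type*} [PartialOrder L]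
    (hFS : IsTwoAcyclicFS r (Onto r) (Into r)) (f : L ≃o Pairs r) :
    ∃ e : S ≃ JIrrC L, ∀ x y : S,
      (r x y ↔ toL (e x) (e y)) ∧
      (Onto r x y ↔ ontoL (e x) (e y)) ∧
      (Into r x y ↔ intoL (e x) (e y)) := by
  let g (x : S) : JIrrC L := ⟨f.symm (jpair r x), (cjirr_map_iff f.symm).2 (cjirr_jpair hFS x)⟩
  have hg : Function.Bijective g := by
    refine ⟨fun x y h => jpair_injective hFS (f.symm.injective (congrArg Subtype.val h)), ?_⟩
    rintro ⟨j, hj⟩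
    obtain ⟨x, hx⟩ := exists_jpair_eq_of_cjirr ((cjirr_map_iff f).2 hj)
    exact ⟨x, Subtype.ext (f.symm_apply_eq.2 hx)⟩
  have hκ (x : S) : IsKappa (g x : L) (f.symm (mpair r x)) :=
    (isKappa_map_iff f.symm).2 (isKappa_jpair hFS x)
  refine ⟨Equiv.ofBijective g hg, fun x y => ⟨?_, ?_, ?_⟩⟩
  · rw [Equiv.ofBijective_apply, Equiv.ofBijective_apply, toL_iff_of_isKappa (hκ y),
      f.symm.le_iff_le, jpair_le_mpair_iff, not_not]
  · exact jpair_le_jpair_iff.symm.trans f.symm.le_iff_le.symm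
  · rw [Equiv.ofBijective_apply, Equiv.ofBijective_apply, intoL_iff_of_isKappa (hκ x) (hκ y),
      f.symm.le_iff_le, mpair_le_mpair_iff]

/-- Theorem 1.4/1.5 (infinite FTFSDL): a poset `L` is a well separated κ-lattice if and only
if it is isomorphic to `Pairs(→)` for a two-acyclic factorization system `(Ш, →, ↠, ↪)`.
If so, the system is isomorphic to `(JIrr^c(L), →_L, ↠_L, ↪_L)`, and
`x ↦ ({j ∈ JIrr^c : j ≤ x}, κᵈ({m ∈ MIrr^c : m ≥ x}))` is an isomorphism from `L` to
`Pairs(→_L)` with inverse `(X,Y) ↦ ⋁X = ⋀κ(Y)`. -/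
theorem wellsep_kappa_iff_pairs (L : Type u) [PartialOrder L] :
    ((IsKappaLattice L ∧ WellSeparated L) ↔
      ∃ (S : Type u) (r ont inj : S → S → Prop),
        IsTwoAcyclicFS r ont inj ∧ Nonempty (L ≃o Pairs r)) ∧
    (IsKappaLattice L → WellSeparated L →
      (∀ (S : Type u) (r ont inj : S → S → Prop), IsTwoAcyclicFS r ont inj →
        (L ≃o Pairs r) →
        ∃ e : S ≃ JIrrC L, ∀ x y : S,
          (r x y ↔ toL (e x) (e y)) ∧
          (ont x y ↔ ontoL (e x) (e y)) ∧
          (inj x y ↔ intoL (e x) (e y))) ∧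
      (∃ e : L ≃o Pairs (toL (L := L)),
        (∀ x : L,
          (e x).val.1 = {j : JIrrC L | (j : L) ≤ x} ∧
          (e x).val.2 = {j : JIrrC L | ∃ m : L, CMIrr m ∧ x ≤ m ∧ IsKappad m (j : L)}) ∧
        (∀ p : Pairs (toL (L := L)),
          IsLUB (Subtype.val '' p.val.1) (e.symm p) ∧
          IsGLB {k : L | ∃ j ∈ p.val.2, IsKappa (j : L) k} (e.symm p)))) := by
  refine ⟨⟨fun ⟨hK, hW⟩ => ⟨JIrrC L, toL, ontoL, intoL, isTwoAcyclicFS_toL hK hW,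
    ⟨toPairs hK hW⟩⟩, ?_⟩, fun hK hW => ⟨?_, toPairs hK hW,
    fun x => ⟨rfl, Set.ext fun _ => le_kap_iff_exists_isKappad hK⟩, fun p => ?_⟩⟩
  · rintro ⟨S, r, ont, inj, hFS, ⟨f⟩⟩
    obtain ⟨rfl, rfl⟩ := hFS.eq_onto_into
    exact ⟨.of_orderIso f (isKappaLattice_pairs hFS), .of_orderIso f (wellSeparated_pairs hFS)⟩
  · intro S r ont inj hFS f
    obtain ⟨rfl, rfl⟩ := hFS.eq_onto_into
    exact exists_equiv_jirrC_of_orderIso hFS f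
  · obtain ⟨x, rfl⟩ := (toPairs hK hW).surjective p
    rw [OrderIso.symm_apply_apply]
    exact ⟨isLUB_image_val_setOf_le hK x, isGLB_setOf_isKappa hK hW x⟩

end SDL
end

section
/- Suppose (Ш, →, ↠, ↪) is a finite two-acyclic factorization system and Щ ⊆ Ш is a ⇝-upset. Then the restriction of (Ш, →, ↠, ↪) to Щ (restricting all three relations to Щ) is a two-acyclic factorization system, and the map (X,Y) ↦ (X ∩ Щ, Y ∩ Щ) is a surjective lattice homomorphism from Pairs(→) to the lattice of maximal orthogonal pairs of the restricted system. Moreover, every lattice quotient of Pairs(→) arises in this way for a unique ⇝-upset Щ. -/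
/-!
Maximal orthogonal pairs of `→` are the formal concepts of `↛`, so `Pairs(→)` is a finite concept
lattice. Its join-irreducibles are the `j x = ofObject x`, with `κ (j x) = ofAttribute x` and
lower cover `j x ⊓ κ (j x)`.

Every arrow `x → z` factors as `x ↠ w ↪ z` with `w ⇝ x` (take `w` `↪`-minimal among the
factorizations) and also with `w ⇝ z` (take `w` `↠`-minimal). Hence for a `⇝`-upset `Щ` the
polars of `↛` restricted to `Щ` are the restrictions of the polars, so `c ↦ c ∩ Щ` maps concepts
to concepts; it commutes with intersections of extents (meets) and of intents (joins).

Conversely, a lattice quotient `ψ` is recorded by the set `Щ` of those `x` with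
`ψ (j x) ≰ ψ (κ (j x))`, and `ψ a ≤ ψ b` iff `a ∩ Щ ⊆ b`: if `a ∩ Щ ⊆ b`, adjoin to `b` one at a
time the `↠`-minimal elements of `a \ b`; these are contracted, so `ψ b` does not move. This
order condition pins down `Щ`, and `Щ` is a `⇝`-upset because a forcing `x ⇝ y` yields
`j y ≤ κ (j y) ⊔ j x` and `j x ⊓ κ (j x) ≤ κ (j y)` (or their duals), which transport
`ψ (j x) ≤ ψ (κ (j x))` to `y`.
-/

open Concept Function

theorem OrderIso.isLUB_pair_iff {α β : Type*} [PartialOrder α] [Lattice β] (e : α ≃o β)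
    {a b c : α} : IsLUB {a, b} c ↔ e c = e a ⊔ e b := by
  rw [← e.isLUB_image', Set.image_pair]
  exact ⟨fun h => h.unique isLUB_pair, fun h => h ▸ isLUB_pair⟩

theorem OrderIso.isGLB_pair_iff {α β : Type*} [PartialOrder α] [Lattice β] (e : α ≃o β)
    {a b c : α} : IsGLB {a, b} c ↔ e c = e a ⊓ e b := by
  rw [← e.isGLB_image', Set.image_pair]
  exact ⟨fun h => h.unique isGLB_pair, fun h => h ▸ isGLB_pair⟩

theorem exists_orderIso_apply_eq {ι α β : Type*} [PartialOrder α] [PartialOrder β]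
    {f : ι → α} {g : ι → β} (hf : Surjective f) (hg : Surjective g)
    (hfg : ∀ i j, f i ≤ f j ↔ g i ≤ g j) : ∃ e : α ≃o β, ∀ i, e (f i) = g i := by
  have hg_eq : ∀ i j, f i = f j → g i = g j := fun i j hij =>
    le_antisymm ((hfg i j).1 hij.le) ((hfg j i).1 hij.ge)
  let e : α ↪o β := OrderEmbedding.ofMapLEIff (g ∘ surjInv hf) fun a b => by
    rw [comp_apply, comp_apply, ← hfg, surjInv_eq hf, surjInv_eq hf]
  have he : ∀ i, e (f i) = g i := fun i => hg_eq _ _ (surjInv_eq hf _)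
  refine ⟨OrderIso.ofSurjective e fun b => ?_, he⟩
  obtain ⟨i, rfl⟩ := hg b
  exact ⟨f i, he i⟩

theorem exists_rel_minimal_of_finite {α : Type*} [Finite α] {q : α → α → Prop}
    (refl : ∀ a, q a a) (trans : ∀ {a b c}, q a b → q b c → q a c)
    (antisymm : ∀ {a b}, q a b → q b a → a = b) {A : Set α} (hA : A.Nonempty) :
    ∃ m ∈ A, ∀ a ∈ A, q a m → a = m := by
  obtain ⟨m, hmA, hmin⟩ := A.toFinite.exists_minimalFor (fun a => {b | q b a}) A hA
  exact ⟨m, hmA, fun a ha ham => antisymm ham (hmin ha (fun b hb => trans hb ham) (refl m))⟩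

namespace LatticeHom

variable {α β : Type*} [Lattice α] [Lattice β] (ψ : LatticeHom α β) {a b c d : α}

theorem map_le_of_le_sup_of_inf_le (hab : ψ a ≤ ψ b) (hc : c ≤ d ⊔ a) (hd : a ⊓ b ≤ d) :
    ψ c ≤ ψ d := by
  have had : ψ a ≤ ψ d := by
    simpa only [map_inf, inf_eq_left.2 hab] using OrderHomClass.mono ψ hd
  simpa only [map_sup, sup_eq_left.2 had] using OrderHomClass.mono ψ hc

theorem map_le_of_inf_le_of_le_sup (hab : ψ a ≤ ψ b) (hc : c ≤ b ⊔ a) (hd : c ⊓ b ≤ d) :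
    ψ c ≤ ψ d := by
  have hcb : ψ c ≤ ψ b := by
    simpa only [map_sup, sup_eq_left.2 hab] using OrderHomClass.mono ψ hc
  simpa only [map_inf, inf_eq_left.2 hcb] using OrderHomClass.mono ψ hd

end LatticeHom

instance Concept.finite {α β : Type*} {r : α → β → Prop} [Finite α] : Finite (Concept α β r) :=
  Finite.of_injective _ Concept.extent_injective

namespace Concept

variable {α β : Type*} {r : α → β → Prop} {c : Concept α β r} {a : α} {b : β}

theorem ofObject_le_iff : ofObject r a ≤ c ↔ a ∈ c.extent := by simp

theorem mem_extent_ofAttribute : a ∈ (ofAttribute r b).extent ↔ r a b :=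
  mem_lowerPolar_singleton r

theorem mem_intent_ofObject : b ∈ (ofObject r a).intent ↔ r a b :=
  mem_upperPolar_singleton r

end Concept

namespace SDL

variable {S : Type*}

def pairsOrderIsoConcept (r : S → S → Prop) : Pairs r ≃o Concept S S (¬ r · ·) where
  toFun p := ⟨p.val.1, p.val.2, p.prop.1.symm, p.prop.2.symm⟩
  invFun c := ⟨(c.extent, c.intent), c.upperPolar_extent.symm, c.lowerPolar_intent.symm⟩
  left_inv _ := rfl
  right_inv _ := rfl
  map_rel_iff' := Iff.rfl

def IsForcingUpset (ont inj : S → S → Prop) (U : Set S) : Prop :=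
  ∀ x y, Forces ont inj x y → y ∈ U → x ∈ U

variable {r ont inj : S → S → Prop} {U : Set S} {x y z : S}

namespace IsFactSystem

theorem rel_of_onto_of_rel (h : IsFactSystem r ont inj) (hxy : ont x y) (hyz : r y z) :
    r x z :=
  (h.onto_iff x y).1 hxy z hyz

theorem rel_of_rel_of_into (h : IsFactSystem r ont inj) (hzx : r z x) (hxy : inj x y) :
    r z y :=
  (h.into_iff x y).1 hxy z hzx

theorem rel_of_onto (h : IsFactSystem r ont inj) (hxy : ont x y) : r x y :=
  h.rel_of_onto_of_rel hxy (h.refl y)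

theorem rel_of_into (h : IsFactSystem r ont inj) (hxy : inj x y) : r x y :=
  h.rel_of_rel_of_into (h.refl x) hxy

theorem onto_refl (h : IsFactSystem r ont inj) (x : S) : ont x x :=
  (h.onto_iff x x).2 fun _ => id

theorem into_refl (h : IsFactSystem r ont inj) (x : S) : inj x x :=
  (h.into_iff x x).2 fun _ => id

theorem onto_trans (h : IsFactSystem r ont inj) (hxy : ont x y) (hyz : ont y z) : ont x z :=
  (h.onto_iff x z).2 fun _ hw => h.rel_of_onto_of_rel hxy (h.rel_of_onto_of_rel hyz hw)

theorem into_trans (h : IsFactSystem r ont inj) (hxy : inj x y) (hyz : inj y z) : inj x z :=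
  (h.into_iff x z).2 fun _ hw => h.rel_of_rel_of_into (h.rel_of_rel_of_into hw hxy) hyz

theorem exists_onto_into (h : IsFactSystem r ont inj) (hxz : r x z) :
    ∃ y, ont x y ∧ inj y z :=
  (h.mult_iff x z).1 hxz

theorem mem_extent_ofObject (h : IsFactSystem r ont inj) :
    y ∈ (ofObject (¬ r · ·) x).extent ↔ ont x y := by
  simp [h.onto_iff, Onto, mem_lowerPolar_iff, mem_upperPolar_iff, not_imp_not]

theorem mem_intent_ofAttribute (h : IsFactSystem r ont inj) :
    y ∈ (ofAttribute (¬ r · ·) x).intent ↔ inj y x := by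
  simp [h.into_iff, Into, mem_lowerPolar_iff, mem_upperPolar_iff, not_imp_not]

theorem mem_extent_of_onto (h : IsFactSystem r ont inj) (c : Concept S S (¬ r · ·))
    (hx : x ∈ c.extent) (hxy : ont x y) : y ∈ c.extent := by
  rw [← c.lowerPolar_intent] at hx ⊢
  exact fun v hv hyv => hx hv (h.rel_of_onto_of_rel hxy hyv)

theorem mem_intent_of_into (h : IsFactSystem r ont inj) (c : Concept S S (¬ r · ·))
    (hy : y ∈ c.intent) (hxy : inj x y) : x ∈ c.intent := by
  rw [← c.upperPolar_extent] at hy ⊢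
  exact fun v hv hvx => hy hv (h.rel_of_rel_of_into hvx hxy)

end IsFactSystem

namespace IsTwoAcyclicFS

theorem eq_of_onto_of_rel (h : IsTwoAcyclicFS r ont inj) (hxy : ont x y) (hyx : r y x) :
    y = x := by
  obtain ⟨t, hyt, htx⟩ := h.exists_onto_into hyx
  obtain rfl : x = t := h.brick x t (h.onto_trans hxy hyt) htx
  exact h.onto_antisymm y x hyt hxy

theorem eq_of_into_of_rel (h : IsTwoAcyclicFS r ont inj) (hyx : inj y x) (hxy : r x y) :
    y = x := by
  obtain ⟨t, hxt, hty⟩ := h.exists_onto_into hxy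
  obtain rfl : x = t := h.brick x t hxt (h.into_trans hty hyx)
  exact h.into_antisymm y x hyx hty

theorem exists_forces_source [Finite S] (h : IsTwoAcyclicFS r ont inj) (hxz : r x z) :
    ∃ w, Forces ont inj w x ∧ ont x w ∧ inj w z := by
  obtain ⟨w, ⟨hxw, hwz⟩, hmin⟩ := exists_rel_minimal_of_finite h.into_refl h.into_trans
    (h.into_antisymm _ _) (A := {w | ont x w ∧ inj w z}) (h.exists_onto_into hxz)
  exact ⟨w, .inr ⟨hxw, fun v hxv hvw => hmin v ⟨hxv, h.into_trans hvw hwz⟩ hvw⟩, hxw, hwz⟩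

theorem exists_forces_target [Finite S] (h : IsTwoAcyclicFS r ont inj) (hxz : r x z) :
    ∃ w, Forces ont inj w z ∧ ont x w ∧ inj w z := by
  obtain ⟨w, ⟨hxw, hwz⟩, hmin⟩ := exists_rel_minimal_of_finite (q := flip ont) h.onto_refl
    (fun hpq hqr => h.onto_trans hqr hpq) (fun hpq hqp => h.onto_antisymm _ _ hqp hpq)
    (A := {w | ont x w ∧ inj w z}) (h.exists_onto_into hxz)
  exact ⟨w, .inl ⟨hwz, fun v hvz hwv => hmin v ⟨h.onto_trans hxw hwv, hvz⟩ hwv⟩, hxw, hwz⟩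

end IsTwoAcyclicFS

theorem exists_mem_factor_of_source_mem [Finite S] (h : IsTwoAcyclicFS r ont inj)
    (hU : IsForcingUpset ont inj U) (hx : x ∈ U) (hxz : r x z) :
    ∃ w ∈ U, ont x w ∧ inj w z := by
  obtain ⟨w, hwx, hxw, hwz⟩ := h.exists_forces_source hxz
  exact ⟨w, hU w x hwx hx, hxw, hwz⟩

theorem exists_mem_factor_of_target_mem [Finite S] (h : IsTwoAcyclicFS r ont inj)
    (hU : IsForcingUpset ont inj U) (hz : z ∈ U) (hxz : r x z) :
    ∃ w ∈ U, ont x w ∧ inj w z := by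
  obtain ⟨w, hwz, hxw, hwz'⟩ := h.exists_forces_target hxz
  exact ⟨w, hU w z hwz hz, hxw, hwz'⟩

theorem onto_restrictRel_iff [Finite S] (h : IsTwoAcyclicFS r ont inj)
    (hU : IsForcingUpset ont inj U) {x y : U} : Onto (restrictRel r U) x y ↔ ont x y := by
  refine ⟨fun hxy => (h.onto_iff x y).2 fun z hyz => ?_, fun hxy z => h.rel_of_onto_of_rel hxy⟩
  obtain ⟨w, hwU, hyw, hwz⟩ := exists_mem_factor_of_source_mem h hU y.2 hyz
  exact h.rel_of_rel_of_into (hxy ⟨w, hwU⟩ (h.rel_of_onto hyw)) hwz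

theorem into_restrictRel_iff [Finite S] (h : IsTwoAcyclicFS r ont inj)
    (hU : IsForcingUpset ont inj U) {x y : U} : Into (restrictRel r U) x y ↔ inj x y := by
  refine ⟨fun hxy => (h.into_iff x y).2 fun z hzx => ?_,
    fun hxy z hzx => h.rel_of_rel_of_into hzx hxy⟩
  obtain ⟨w, hwU, hzw, hwx⟩ := exists_mem_factor_of_target_mem h hU x.2 hzx
  exact h.rel_of_onto_of_rel hzw (hxy ⟨w, hwU⟩ (h.rel_of_into hwx))

theorem IsTwoAcyclicFS.restrict [Finite S] (h : IsTwoAcyclicFS r ont inj)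
    (hU : IsForcingUpset ont inj U) :
    IsTwoAcyclicFS (restrictRel r U) (restrictRel ont U) (restrictRel inj U) where
  refl x := h.refl x
  onto_iff _ _ := (onto_restrictRel_iff h hU).symm
  into_iff _ _ := (into_restrictRel_iff h hU).symm
  mult_iff x z := by
    refine ⟨fun hxz => ?_, fun ⟨y, hxy, hyz⟩ => (h.mult_iff x z).2 ⟨y, hxy, hyz⟩⟩
    obtain ⟨w, hwU, hxw, hwz⟩ := exists_mem_factor_of_source_mem h hU x.2 hxz
    exact ⟨⟨w, hwU⟩, hxw, hwz⟩
  onto_antisymm x y hxy hyx := Subtype.ext (h.onto_antisymm x y hxy hyx)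
  into_antisymm x y hxy hyx := Subtype.ext (h.into_antisymm x y hxy hyx)
  brick x y hxy hyx := Subtype.ext (h.brick x y hxy hyx)

theorem upperPolar_preimage_extent [Finite S] (h : IsTwoAcyclicFS r ont inj)
    (hU : IsForcingUpset ont inj U) (c : Concept S S (¬ r · ·)) :
    upperPolar (¬ restrictRel r U · ·) (Subtype.val ⁻¹' c.extent) = Subtype.val ⁻¹' c.intent := by
  ext b
  refine ⟨fun hb => ?_, fun hb a ha => c.rel_extent_intent ha hb⟩
  rw [Set.mem_preimage, ← c.upperPolar_extent]
  intro a ha hab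
  obtain ⟨w, hwU, haw, hwb⟩ := exists_mem_factor_of_target_mem h hU b.2 hab
  exact hb (a := ⟨w, hwU⟩) (h.mem_extent_of_onto c ha haw) (h.rel_of_into hwb)

theorem lowerPolar_preimage_intent [Finite S] (h : IsTwoAcyclicFS r ont inj)
    (hU : IsForcingUpset ont inj U) (c : Concept S S (¬ r · ·)) :
    lowerPolar (¬ restrictRel r U · ·) (Subtype.val ⁻¹' c.intent) = Subtype.val ⁻¹' c.extent := by
  ext a
  refine ⟨fun ha => ?_, fun ha b hb => c.rel_extent_intent ha hb⟩
  rw [Set.mem_preimage, ← c.lowerPolar_intent]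
  intro b hb hab
  obtain ⟨w, hwU, haw, hwb⟩ := exists_mem_factor_of_source_mem h hU a.2 hab
  exact ha (b := ⟨w, hwU⟩) (h.mem_intent_of_into c hb hwb) (h.rel_of_onto haw)

def restrictConcept [Finite S] (h : IsTwoAcyclicFS r ont inj) (hU : IsForcingUpset ont inj U) :
    LatticeHom (Concept S S (¬ r · ·)) (Concept U U (¬ restrictRel r U · ·)) where
  toFun c := ⟨Subtype.val ⁻¹' c.extent, Subtype.val ⁻¹' c.intent,
    upperPolar_preimage_extent h hU c, lowerPolar_preimage_intent h hU c⟩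
  map_sup' _ _ := Concept.ext' rfl
  map_inf' _ _ := Concept.ext rfl

theorem restrictConcept_surjective [Finite S] (h : IsTwoAcyclicFS r ont inj)
    (hU : IsForcingUpset ont inj U) : Surjective (restrictConcept h hU) := fun c => by
  refine ⟨ofAttributes _ (Subtype.val '' c.intent), Concept.ext ?_⟩
  ext a
  change (a : S) ∈ lowerPolar (¬ r · ·) (Subtype.val '' c.intent) ↔ a ∈ c.extent
  rw [← c.lowerPolar_intent]
  simp [mem_lowerPolar_iff, restrictRel]

def restrictPairs [Finite S] (h : IsTwoAcyclicFS r ont inj) (hU : IsForcingUpset ont inj U) :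
    Pairs r → Pairs (restrictRel r U) :=
  (pairsOrderIsoConcept _).symm ∘ restrictConcept h hU ∘ pairsOrderIsoConcept r

theorem restrictPairs_surjective [Finite S] (h : IsTwoAcyclicFS r ont inj)
    (hU : IsForcingUpset ont inj U) : Surjective (restrictPairs h hU) :=
  (pairsOrderIsoConcept _).symm.surjective.comp
    ((restrictConcept_surjective h hU).comp (pairsOrderIsoConcept r).surjective)

theorem restrictPairs_le_iff [Finite S] (h : IsTwoAcyclicFS r ont inj)
    (hU : IsForcingUpset ont inj U) {p q : Pairs r} :
    restrictPairs h hU p ≤ restrictPairs h hU q ↔ p.val.1 ∩ U ⊆ q.val.1 :=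
  ⟨fun hpq x hx => hpq (a := ⟨x, hx.2⟩) hx.1, fun hpq x hx => hpq ⟨hx, x.2⟩⟩

theorem isLUB_restrictPairs [Finite S] (h : IsTwoAcyclicFS r ont inj)
    (hU : IsForcingUpset ont inj U) {p q s : Pairs r} (hs : IsLUB {p, q} s) :
    IsLUB {restrictPairs h hU p, restrictPairs h hU q} (restrictPairs h hU s) := by
  rw [(pairsOrderIsoConcept r).isLUB_pair_iff] at hs
  simp [(pairsOrderIsoConcept _).isLUB_pair_iff, restrictPairs, hs]

theorem isGLB_restrictPairs [Finite S] (h : IsTwoAcyclicFS r ont inj)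
    (hU : IsForcingUpset ont inj U) {p q s : Pairs r} (hs : IsGLB {p, q} s) :
    IsGLB {restrictPairs h hU p, restrictPairs h hU q} (restrictPairs h hU s) := by
  rw [(pairsOrderIsoConcept r).isGLB_pair_iff] at hs
  simp [(pairsOrderIsoConcept _).isGLB_pair_iff, restrictPairs, hs]

theorem extent_ofObject_inter_subset (h : IsTwoAcyclicFS r ont inj) {W : Set S} (hx : x ∉ W) :
    (ofObject (¬ r · ·) x).extent ∩ W ⊆ (ofAttribute (¬ r · ·) x).extent := by
  refine fun y ⟨hxy, hyW⟩ => mem_extent_ofAttribute.2 fun hyx => ?_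
  obtain rfl := h.eq_of_onto_of_rel (h.mem_extent_ofObject.1 hxy) hyx
  exact hx hyW

theorem ofObject_le_ofAttribute_sup_ofObject_of_into (h : IsTwoAcyclicFS r ont inj)
    (hxy : inj x y) : ofObject (¬ r · ·) y ≤ ofAttribute _ y ⊔ ofObject _ x := by
  rw [ofObject_le_iff, ← Concept.lowerPolar_intent]
  rintro v ⟨hvy, hxv⟩ hyv
  obtain rfl := h.eq_of_into_of_rel (h.mem_intent_ofAttribute.1 hvy) hyv
  exact mem_intent_ofObject.1 hxv (h.rel_of_into hxy)

theorem ofObject_inf_ofAttribute_le_of_onto_minimal (h : IsTwoAcyclicFS r ont inj)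
    (hmin : ∀ x', inj x' y → ont x x' → x' = x) :
    ofObject (¬ r · ·) x ⊓ ofAttribute _ x ≤ ofAttribute _ y := by
  refine fun a ⟨hxa, hax⟩ => mem_extent_ofAttribute.2 fun hay => ?_
  obtain ⟨t, hat, hty⟩ := h.exists_onto_into hay
  obtain rfl := hmin t hty (h.onto_trans (h.mem_extent_ofObject.1 hxa) hat)
  exact mem_extent_ofAttribute.1 hax (h.rel_of_onto hat)

theorem ofObject_inf_ofAttribute_le_of_onto (h : IsTwoAcyclicFS r ont inj) (hyx : ont y x) :
    ofObject (¬ r · ·) y ⊓ ofAttribute _ x ≤ ofAttribute _ y := by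
  refine fun a ⟨hya, hax⟩ => mem_extent_ofAttribute.2 fun hay => ?_
  obtain rfl := h.eq_of_onto_of_rel (h.mem_extent_ofObject.1 hya) hay
  exact mem_extent_ofAttribute.1 hax (h.rel_of_onto hyx)

theorem ofObject_le_ofAttribute_sup_ofObject_of_into_maximal (h : IsTwoAcyclicFS r ont inj)
    (hmax : ∀ x', ont y x' → inj x' x → x' = x) :
    ofObject (¬ r · ·) y ≤ ofAttribute _ x ⊔ ofObject _ x := by
  rw [ofObject_le_iff, ← Concept.lowerPolar_intent]
  rintro v ⟨hvx, hxv⟩ hyv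
  obtain ⟨w, hyw, hwv⟩ := h.exists_onto_into hyv
  obtain rfl := hmax w hyw (h.into_trans hwv (h.mem_intent_ofAttribute.1 hvx))
  exact mem_intent_ofObject.1 hxv (h.rel_of_into hwv)

section Quotient

variable {K : Type*} [Lattice K]

def uncontracted (ψ : LatticeHom (Concept S S (¬ r · ·)) K) : Set S :=
  {x | ¬ ψ (ofObject _ x) ≤ ψ (ofAttribute _ x)}

theorem isForcingUpset_uncontracted (h : IsTwoAcyclicFS r ont inj)
    (ψ : LatticeHom (Concept S S (¬ r · ·)) K) : IsForcingUpset ont inj (uncontracted ψ) := by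
  intro x y hxy hy hx
  refine hy ?_
  rcases hxy with ⟨hxy, hmin⟩ | ⟨hyx, hmax⟩
  · exact ψ.map_le_of_le_sup_of_inf_le hx
      (ofObject_le_ofAttribute_sup_ofObject_of_into h hxy)
      (ofObject_inf_ofAttribute_le_of_onto_minimal h hmin)
  · exact ψ.map_le_of_inf_le_of_le_sup hx
      (ofObject_le_ofAttribute_sup_ofObject_of_into_maximal h hmax)
      (ofObject_inf_ofAttribute_le_of_onto h hyx)

theorem map_le_map_of_extent_inter_subset [Finite S] (h : IsTwoAcyclicFS r ont inj)
    (ψ : LatticeHom (Concept S S (¬ r · ·)) K) {a b : Concept S S (¬ r · ·)}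
    (hab : a.extent ∩ uncontracted ψ ⊆ b.extent) : ψ a ≤ ψ b := by
  induction b using WellFoundedGT.induction with
  | _ b ih =>
  by_cases hle : a ≤ b
  · exact OrderHomClass.mono ψ hle
  obtain ⟨x, ⟨hxa, hxb⟩, hmin⟩ := exists_rel_minimal_of_finite (q := flip ont) h.onto_refl
    (fun hpq hqr => h.onto_trans hqr hpq) (fun hpq hqp => h.onto_antisymm _ _ hqp hpq)
    (Set.sdiff_nonempty.2 hle)
  have hcover : ofObject _ x ⊓ ofAttribute _ x ≤ b := by
    rintro y ⟨hxy, hyx⟩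
    by_contra hyb
    have hxy := h.mem_extent_ofObject.1 hxy
    obtain rfl := hmin y ⟨h.mem_extent_of_onto a hxa hxy, hyb⟩ hxy
    exact mem_extent_ofAttribute.1 hyx (h.refl y)
  have hx : ψ (ofObject _ x) ≤ ψ (ofAttribute _ x) := not_not.1 fun hx => hxb (hab ⟨hxa, hx⟩)
  calc ψ a ≤ ψ (b ⊔ ofObject _ x) :=
        ih _ (left_lt_sup.2 fun hxb' => hxb (ofObject_le_iff.1 hxb'))
          fun y hy => le_sup_left (a := b) (hab hy)
    _ = ψ b ⊔ ψ (ofObject _ x) := map_sup ψ _ _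
    _ ≤ ψ b := sup_le le_rfl (ψ.map_le_of_le_sup_of_inf_le hx le_sup_right hcover)

theorem map_le_map_iff [Finite S] (h : IsTwoAcyclicFS r ont inj)
    (ψ : LatticeHom (Concept S S (¬ r · ·)) K) {a b : Concept S S (¬ r · ·)} :
    ψ a ≤ ψ b ↔ a.extent ∩ uncontracted ψ ⊆ b.extent := by
  refine ⟨fun hab x ⟨hxa, hx⟩ => ?_, map_le_map_of_extent_inter_subset h ψ⟩
  by_contra hxb
  have hxb' : ψ (ofObject _ x) ≤ ψ b := (OrderHomClass.mono ψ (ofObject_le_iff.2 hxa)).trans hab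
  exact hx (ψ.map_le_of_inf_le_of_le_sup hxb' le_sup_right (extent_ofObject_inter_subset h hxb))

theorem eq_uncontracted_of_map_le_map_iff (h : IsTwoAcyclicFS r ont inj)
    (ψ : LatticeHom (Concept S S (¬ r · ·)) K) {W : Set S}
    (hW : ∀ a b, ψ a ≤ ψ b ↔ a.extent ∩ W ⊆ b.extent) : W = uncontracted ψ := by
  ext x
  rw [uncontracted, Set.mem_ofPred_eq, hW]
  refine ⟨fun hxW hsub => ?_, not_imp_comm.1 (extent_ofObject_inter_subset h)⟩
  exact mem_extent_ofAttribute.1 (hsub ⟨h.mem_extent_ofObject.2 (h.onto_refl x), hxW⟩) (h.refl x)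

def latticeHomOfPairs (g : Pairs r → K)
    (hsup : ∀ p q s : Pairs r, IsLUB {p, q} s → g s = g p ⊔ g q)
    (hinf : ∀ p q s : Pairs r, IsGLB {p, q} s → g s = g p ⊓ g q) :
    LatticeHom (Concept S S (¬ r · ·)) K where
  toFun := g ∘ (pairsOrderIsoConcept r).symm
  map_sup' _ _ := hsup _ _ _ ((pairsOrderIsoConcept r).isLUB_pair_iff.2 (by simp))
  map_inf' _ _ := hinf _ _ _ ((pairsOrderIsoConcept r).isGLB_pair_iff.2 (by simp))

end Quotient

/-- Theorem 1.6: for a finite two-acyclic factorization system and a `⇝`-upset `Щ`, the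
restriction to `Щ` is a two-acyclic factorization system, the map
`(X,Y) ↦ (X ∩ Щ, Y ∩ Щ)` is a surjective lattice homomorphism of the lattices of maximal
orthogonal pairs, and every lattice quotient of `Pairs(→)` arises this way for a unique
`⇝`-upset. -/
theorem finite_quotients (S : Type u) [Fintype S] (r ont inj : S → S → Prop)
    (h : IsTwoAcyclicFS r ont inj) (U : Set S)
    (hU : ∀ x y, Forces ont inj x y → y ∈ U → x ∈ U) :
    IsTwoAcyclicFS (restrictRel r U) (restrictRel ont U) (restrictRel inj U) ∧
    (∃ f : Pairs r → Pairs (restrictRel r U),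
      (∀ p : Pairs r,
        (f p).val.1 = {a : U | (a : S) ∈ p.val.1} ∧
        (f p).val.2 = {a : U | (a : S) ∈ p.val.2}) ∧
      Function.Surjective f ∧
      (∀ p q s : Pairs r, IsLUB {p, q} s → IsLUB {f p, f q} (f s)) ∧
      (∀ p q s : Pairs r, IsGLB {p, q} s → IsGLB {f p, f q} (f s))) ∧
    (∀ (K : Type v) [Lattice K], ∀ g : Pairs r → K, Function.Surjective g →
      (∀ p q s : Pairs r, IsLUB {p, q} s → g s = g p ⊔ g q) →
      (∀ p q s : Pairs r, IsGLB {p, q} s → g s = g p ⊓ g q) →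
      ∃! V : Set S, (∀ x y, Forces ont inj x y → y ∈ V → x ∈ V) ∧
        ∃ e : K ≃o Pairs (restrictRel r V),
          ∀ p : Pairs r,
            (e (g p)).val.1 = {a : V | (a : S) ∈ p.val.1} ∧
            (e (g p)).val.2 = {a : V | (a : S) ∈ p.val.2}) := by
  refine ⟨h.restrict hU, ⟨restrictPairs h hU, fun p => ⟨rfl, rfl⟩, restrictPairs_surjective h hU,
    fun _ _ _ => isLUB_restrictPairs h hU, fun _ _ _ => isGLB_restrictPairs h hU⟩, ?_⟩
  intro K _ g hg hsup hinf
  set ψ := latticeHomOfPairs g hsup hinf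
  have hψ (p q : Pairs r) : g p ≤ g q ↔ p.val.1 ∩ uncontracted ψ ⊆ q.val.1 :=
    map_le_map_iff h ψ (a := pairsOrderIsoConcept r p) (b := pairsOrderIsoConcept r q)
  have hV := isForcingUpset_uncontracted h ψ
  refine ⟨uncontracted ψ, ⟨hV, ?_⟩, fun W ⟨hW, E, hE⟩ => ?_⟩
  · obtain ⟨E, hE⟩ := exists_orderIso_apply_eq hg (restrictPairs_surjective h hV)
      fun p q => (hψ p q).trans (restrictPairs_le_iff h hV).symm
    exact ⟨E, fun p => by rw [hE]; exact ⟨rfl, rfl⟩⟩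
  · have hEψ (a : Concept S S (¬ r · ·)) :
        E (ψ a) = restrictPairs h hW ((pairsOrderIsoConcept r).symm a) :=
      Subtype.ext (Prod.ext (hE _).1 (hE _).2)
    refine eq_uncontracted_of_map_le_map_iff h ψ fun a b => ?_
    rw [← E.le_iff_le, hEψ, hEψ]
    exact restrictPairs_le_iff h hW

end SDL
end

section
/- Suppose → is a reflexive relation, and ↠ and ↪ are reflexive and transitive relations, on a set Ш. Then: (1) if (↠₁,↪₁) ⊆ (↠₂,↪₂) componentwise for pairs of reflexive transitive relations, then Mult(↠₁,↪₁) ⊆ Mult(↠₂,↪₂); (2) ↠ ∪ ↪ ⊆ Mult(↠,↪); (3) Mult(Fact(→)) ⊆ →; (4) Fact(Mult(↠,↪)) ⊇ (↠,↪) componentwise; (5) Mult(Fact(Mult(↠,↪))) = Mult(↠,↪). -/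
namespace SDL

variable {S : Type*}

theorem Mult.mono {ont₁ inj₁ ont₂ inj₂ : S → S → Prop}
    (hont : ∀ x y, ont₁ x y → ont₂ x y) (hinj : ∀ x y, inj₁ x y → inj₂ x y) {x z : S} :
    Mult ont₁ inj₁ x z → Mult ont₂ inj₂ x z
  | ⟨y, hxy, hyz⟩ => ⟨y, hont x y hxy, hinj y z hyz⟩

section

variable {ont inj : S → S → Prop}

theorem mult_of_onto (hinj : ∀ x, inj x x) {x y : S} (h : ont x y) : Mult ont inj x y :=
  ⟨y, h, hinj y⟩

theorem mult_of_into (hont : ∀ x, ont x x) {x y : S} (h : inj x y) : Mult ont inj x y :=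
  ⟨x, hont x, h⟩

theorem mult_refl (hont : ∀ x, ont x x) (hinj : ∀ x, inj x x) (x : S) : Mult ont inj x x :=
  mult_of_onto hinj (hont x)

theorem onto_mult_of_onto (hont : ∀ ⦃x y z⦄, ont x y → ont y z → ont x z) {x y : S}
    (h : ont x y) : Onto (Mult ont inj) x y
  | _, ⟨w, hyw, hwz⟩ => ⟨w, hont h hyw, hwz⟩

theorem into_mult_of_into (hinj : ∀ ⦃x y z⦄, inj x y → inj y z → inj x z) {x y : S}
    (h : inj x y) : Into (Mult ont inj) x y
  | _, ⟨w, hzw, hwx⟩ => ⟨w, hzw, hinj hwx h⟩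

end

theorem mult_onto_into_le {r : S → S → Prop} (hr : ∀ x, r x x) {x z : S}
    (h : Mult (Onto r) (Into r) x z) : r x z :=
  let ⟨y, hxy, hyz⟩ := h
  hxy z (hyz y (hr y))

theorem mult_onto_into_mult_iff {ont inj : S → S → Prop} (hontr : ∀ x, ont x x)
    (hontt : ∀ ⦃x y z⦄, ont x y → ont y z → ont x z) (hinjr : ∀ x, inj x x)
    (hinjt : ∀ ⦃x y z⦄, inj x y → inj y z → inj x z) {x z : S} :
    Mult (Onto (Mult ont inj)) (Into (Mult ont inj)) x z ↔ Mult ont inj x z :=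
  ⟨mult_onto_into_le (mult_refl hontr hinjr),
    Mult.mono (fun _ _ => onto_mult_of_onto hontt) (fun _ _ => into_mult_of_into hinjt)⟩

/-- Proposition 2.1: basic facts about the operations `Fact` and `Mult`. -/
theorem mult_fact_facts (S : Type u) (r ont inj : S → S → Prop)
    (hr : ∀ x, r x x)
    (hontr : Reflexive ont) (hontt : Transitive ont)
    (hinjr : Reflexive inj) (hinjt : Transitive inj) :
    (∀ ont₁ inj₁ ont₂ inj₂ : S → S → Prop,
      Reflexive ont₁ → Transitive ont₁ → Reflexive inj₁ → Transitive inj₁ →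
      Reflexive ont₂ → Transitive ont₂ → Reflexive inj₂ → Transitive inj₂ →
      (∀ x y, ont₁ x y → ont₂ x y) → (∀ x y, inj₁ x y → inj₂ x y) →
      ∀ x y, Mult ont₁ inj₁ x y → Mult ont₂ inj₂ x y) ∧
    (∀ x y, ont x y ∨ inj x y → Mult ont inj x y) ∧
    (∀ x y, Mult (Onto r) (Into r) x y → r x y) ∧
    ((∀ x y, ont x y → Onto (Mult ont inj) x y) ∧
     (∀ x y, inj x y → Into (Mult ont inj) x y)) ∧
    (∀ x y, Mult (Onto (Mult ont inj)) (Into (Mult ont inj)) x y ↔ Mult ont inj x y) :=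
  ⟨fun _ _ _ _ _ _ _ _ _ _ _ _ hont hinj _ _ => Mult.mono hont hinj,
    fun _ _ h => h.elim (mult_of_onto hinjr) (mult_of_into hontr),
    fun _ _ => mult_onto_into_le hr,
    ⟨fun _ _ => onto_mult_of_onto hontt, fun _ _ => into_mult_of_into hinjt⟩,
    fun _ _ => mult_onto_into_mult_iff hontr hontt hinjr hinjt⟩

end SDL
end

section
/- Let (Ш, →, ↠, ↪) be a two-acyclic factorization system. If x → y ↪ x or x ↠ y → x, then x = y. -/
namespace SDL

namespace IsFactSystem

variable {S : Type*} {r ont inj : S → S → Prop}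

theorem ont_trans (h : IsFactSystem r ont inj) {x y z : S} (hxy : ont x y) (hyz : ont y z) :
    ont x z := by
  rw [h.onto_iff] at hxy hyz ⊢
  exact fun w hzw => hxy w (hyz w hzw)

theorem inj_trans (h : IsFactSystem r ont inj) {x y z : S} (hxy : inj x y) (hyz : inj y z) :
    inj x z := by
  rw [h.into_iff] at hxy hyz ⊢
  exact fun w hwx => hyz w (hxy w hwx)

end IsFactSystem

namespace IsTwoAcyclicFS

variable {S : Type*} {r ont inj : S → S → Prop}

/-- Factor `x → y` as `x ↠ w ↪ y`; then `w ↪ y ↪ x`, so the brick condition forces `w = x`. -/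
theorem eq_of_rel_of_inj (h : IsTwoAcyclicFS r ont inj) {x y : S} (hr : r x y)
    (hyx : inj y x) : x = y := by
  obtain ⟨w, hxw, hwy⟩ := (h.mult_iff x y).1 hr
  obtain rfl : x = w := h.brick x w hxw (h.inj_trans hwy hyx)
  exact h.into_antisymm x y hwy hyx

/-- Factor `y → x` as `y ↠ w ↪ x`; then `x ↠ y ↠ w`, so the brick condition forces `x = w`. -/
theorem eq_of_ont_of_rel (h : IsTwoAcyclicFS r ont inj) {x y : S} (hxy : ont x y)
    (hr : r y x) : x = y := by
  obtain ⟨w, hyw, hwx⟩ := (h.mult_iff y x).1 hr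
  obtain rfl : x = w := h.brick x w (h.ont_trans hxy hyw) hwx
  exact h.onto_antisymm x y hxy hyw

end IsTwoAcyclicFS

/-- Proposition 2.4: in a two-acyclic factorization system, if `x → y ↪ x` or `x ↠ y → x`,
then `x = y`. -/
theorem acyclic_stronger (S : Type u) (r ont inj : S → S → Prop)
    (h : IsTwoAcyclicFS r ont inj) (x y : S)
    (hxy : (r x y ∧ inj y x) ∨ (ont x y ∧ r y x)) : x = y := by
  rcases hxy with ⟨hr, hyx⟩ | ⟨hxy, hr⟩
  · exact h.eq_of_rel_of_inj hr hyx
  · exact h.eq_of_ont_of_rel hxy hr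

end SDL
end

section
/- Given two partial orders ↪ and ↠ on a set Ш, the tuple (Ш, Mult(↠,↪), ↠, ↪) is a two-acyclic factorization system if and only if the following hold: (i) there do not exist distinct x,y in Ш with x ↪ y and y ↠ x; (ii) for all x,y ∈ Ш, x ↠ y iff down_↪ down_↠ {y} ⊆ down_↪ down_↠ {x}; (iii) for all x,y ∈ Ш, x ↪ y iff up_↠ up_↪ {x} ⊆ up_↠ up_↪ {y}. If these conditions hold, then for any X ⊆ Ш, X^⊥ = Ш \ down_↪(down_↠ X) and ^⊥X = Ш \ up_↠(up_↪ X). -/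
/-! The point is that `down_↪ down_↠ X` is exactly the `Mult(↠,↪)`-image of `X` and
`up_↠ up_↪ X` its preimage. Hence conditions (ii) and (iii) literally say that `↠` and `↪`
are the two factors of `Fact(Mult(↠,↪))`, the two descriptions of the orthogonals are
rewritings of the definitions, and condition (i) is the brick condition. -/

namespace SDL

section Mult

variable {S : Type*} {ont inj : S → S → Prop}

theorem mem_dnRel_dnRel {X : Set S} {z : S} :
    z ∈ dnRel inj (dnRel ont X) ↔ ∃ x ∈ X, Mult ont inj x z := by
  simp only [dnRel, Mult, Set.mem_ofPred_eq]
  grind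

theorem mem_upRel_upRel {X : Set S} {z : S} :
    z ∈ upRel ont (upRel inj X) ↔ ∃ x ∈ X, Mult ont inj z x := by
  simp only [upRel, Mult, Set.mem_ofPred_eq]
  grind

theorem dnRel_dnRel_singleton_subset_iff {x y : S} :
    dnRel inj (dnRel ont {y}) ⊆ dnRel inj (dnRel ont {x}) ↔ Onto (Mult ont inj) x y := by
  simp only [Set.subset_def, mem_dnRel_dnRel, Set.mem_singleton_iff, exists_eq_left, Onto]

theorem upRel_upRel_singleton_subset_iff {x y : S} :
    upRel ont (upRel inj {x}) ⊆ upRel ont (upRel inj {y}) ↔ Into (Mult ont inj) x y := by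
  simp only [Set.subset_def, mem_upRel_upRel, Set.mem_singleton_iff, exists_eq_left, Into]

theorem perpR_mult (X : Set S) : perpR (Mult ont inj) X = (dnRel inj (dnRel ont X))ᶜ := by
  ext z
  simp only [perpR, Set.mem_compl_iff, mem_dnRel_dnRel, Set.mem_ofPred_eq]
  grind

theorem perpL_mult (X : Set S) : perpL (Mult ont inj) X = (upRel ont (upRel inj X))ᶜ := by
  ext z
  simp only [perpL, Set.mem_compl_iff, mem_upRel_upRel, Set.mem_ofPred_eq]
  grind

theorem isTwoAcyclicFS_mult_iff (hontr : ∀ x, ont x x)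
    (honta : ∀ x y, ont x y → ont y x → x = y) (hinjr : ∀ x, inj x x)
    (hinja : ∀ x y, inj x y → inj y x → x = y) :
    IsTwoAcyclicFS (Mult ont inj) ont inj ↔
      (∀ x y, inj x y → ont y x → x = y) ∧
      (∀ x y, ont x y ↔ Onto (Mult ont inj) x y) ∧
      (∀ x y, inj x y ↔ Into (Mult ont inj) x y) := by
  constructor
  · intro h
    exact ⟨fun x y hxy hyx => (h.brick y x hyx hxy).symm, h.onto_iff, h.into_iff⟩
  · rintro ⟨hbrick, honto, hinto⟩
    exact
      { refl := fun x => ⟨x, hontr x, hinjr x⟩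
        onto_iff := honto
        into_iff := hinto
        mult_iff := fun _ _ => Iff.rfl
        onto_antisymm := honta
        into_antisymm := hinja
        brick := fun x y hxy hyx => (hbrick y x hyx hxy).symm }

end Mult

theorem two_acyclic_from_posets_general (S : Type u) (ont inj : S → S → Prop)
    (hontr : Reflexive ont)
    (honta : ∀ x y, ont x y → ont y x → x = y)
    (hinjr : Reflexive inj)
    (hinja : ∀ x y, inj x y → inj y x → x = y) :
    (IsTwoAcyclicFS (Mult ont inj) ont inj ↔
      ((∀ x y, inj x y → ont y x → x = y) ∧
       (∀ x y, ont x y ↔ dnRel inj (dnRel ont {y}) ⊆ dnRel inj (dnRel ont {x})) ∧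
       (∀ x y, inj x y ↔ upRel ont (upRel inj {x}) ⊆ upRel ont (upRel inj {y})))) ∧
    (((∀ x y, inj x y → ont y x → x = y) ∧
      (∀ x y, ont x y ↔ dnRel inj (dnRel ont {y}) ⊆ dnRel inj (dnRel ont {x})) ∧
      (∀ x y, inj x y ↔ upRel ont (upRel inj {x}) ⊆ upRel ont (upRel inj {y}))) →
      ∀ X : Set S,
        perpR (Mult ont inj) X = (dnRel inj (dnRel ont X))ᶜ ∧
        perpL (Mult ont inj) X = (upRel ont (upRel inj X))ᶜ) := by
  simp only [dnRel_dnRel_singleton_subset_iff, upRel_upRel_singleton_subset_iff]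
  exact ⟨isTwoAcyclicFS_mult_iff hontr honta hinjr hinja,
    fun _ X => ⟨perpR_mult X, perpL_mult X⟩⟩

/-- Proposition 2.6: characterization of two-acyclic factorization systems in terms of the
two partial orders `↠` and `↪` alone, together with the resulting description of the
orthogonality operators. -/
theorem two_acyclic_from_posets (S : Type u) (ont inj : S → S → Prop)
    (hontr : Reflexive ont) (hontt : Transitive ont)
    (honta : ∀ x y, ont x y → ont y x → x = y)
    (hinjr : Reflexive inj) (hinjt : Transitive inj)
    (hinja : ∀ x y, inj x y → inj y x → x = y) :
    (IsTwoAcyclicFS (Mult ont inj) ont inj ↔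
      ((∀ x y, inj x y → ont y x → x = y) ∧
       (∀ x y, ont x y ↔ dnRel inj (dnRel ont {y}) ⊆ dnRel inj (dnRel ont {x})) ∧
       (∀ x y, inj x y ↔ upRel ont (upRel inj {x}) ⊆ upRel ont (upRel inj {y})))) ∧
    (((∀ x y, inj x y → ont y x → x = y) ∧
      (∀ x y, ont x y ↔ dnRel inj (dnRel ont {y}) ⊆ dnRel inj (dnRel ont {x})) ∧
      (∀ x y, inj x y ↔ upRel ont (upRel inj {x}) ⊆ upRel ont (upRel inj {y}))) →
      ∀ X : Set S,
        perpR (Mult ont inj) X = (dnRel inj (dnRel ont X))ᶜ ∧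
        perpL (Mult ont inj) X = (upRel ont (upRel inj X))ᶜ) :=
  two_acyclic_from_posets_general S ont inj hontr honta hinjr hinja

end SDL
end

section
/- Let (Ш, →, ↠, ↪) be a two-acyclic factorization system. For any x ∈ Ш, T(x) = ^⊥({x}^⊥) and F(x) = (^⊥{x})^⊥. Moreover, x is uniquely determined by T(x), and x is uniquely determined by F(x) (i.e., T(x₁) = T(x₂) implies x₁ = x₂, and F(x₁) = F(x₂) implies x₁ = x₂). -/
namespace SDL

variable {S : Type*}

theorem setOf_onto_eq_perpL_perpR (r : S → S → Prop) (x : S) :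
    {x' | Onto r x x'} = perpL r (perpR r {x}) := by
  ext x'
  simp only [Onto, perpL, perpR, Set.mem_ofPred_eq, Set.mem_singleton_iff, forall_eq]
  exact ⟨fun h z hxz hx'z => hxz (h z hx'z), fun h z hx'z => not_not.1 fun hxz => h z hxz hx'z⟩

theorem setOf_into_eq_perpR_perpL (r : S → S → Prop) (x : S) :
    {x' | Into r x' x} = perpR r (perpL r {x}) := by
  ext x'
  simp only [Into, perpL, perpR, Set.mem_ofPred_eq, Set.mem_singleton_iff, forall_eq]
  exact ⟨fun h z hzx hzx' => hzx (h z hzx'), fun h z hzx' => not_not.1 fun hzx => h z hzx hzx'⟩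

theorem eq_of_setOf_rel_eq {R : S → S → Prop} (refl : ∀ x, R x x)
    (antisymm : ∀ x y, R x y → R y x → x = y) {x₁ x₂ : S}
    (h : {y | R x₁ y} = {y | R x₂ y}) : x₁ = x₂ :=
  antisymm _ _ ((Set.ext_iff.1 h x₂).2 (refl x₂)) ((Set.ext_iff.1 h x₁).1 (refl x₁))

namespace IsFactSystem

variable {r ont inj : S → S → Prop} (h : IsFactSystem r ont inj)
include h

theorem onto_refl_s9 (x : S) : ont x x := (h.onto_iff x x).2 fun _ => id

theorem into_refl_s9 (x : S) : inj x x := (h.into_iff x x).2 fun _ => id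

theorem Tset_eq_perpL_perpR (x : S) : Tset ont x = perpL r (perpR r {x}) :=
  (Set.ext fun x' => h.onto_iff x x').trans (setOf_onto_eq_perpL_perpR r x)

theorem Fset_eq_perpR_perpL (x : S) : Fset inj x = perpR r (perpL r {x}) :=
  (Set.ext fun x' => h.into_iff x' x).trans (setOf_into_eq_perpR_perpL r x)

end IsFactSystem

/-- Proposition 2.9: in a two-acyclic factorization system, `T(x) = ^⊥({x}^⊥)`,
`F(x) = (^⊥{x})^⊥`, and `x` is determined by `T(x)` and by `F(x)`. -/
theorem Tset_Fset_closures (S : Type u) (r ont inj : S → S → Prop)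
    (h : IsTwoAcyclicFS r ont inj) :
    (∀ x, Tset ont x = perpL r (perpR r {x})) ∧
    (∀ x, Fset inj x = perpR r (perpL r {x})) ∧
    (∀ x₁ x₂, Tset ont x₁ = Tset ont x₂ → x₁ = x₂) ∧
    (∀ x₁ x₂, Fset inj x₁ = Fset inj x₂ → x₁ = x₂) :=
  ⟨h.Tset_eq_perpL_perpR, h.Fset_eq_perpR_perpL,
    fun _ _ => eq_of_setOf_rel_eq h.onto_refl_s9 h.onto_antisymm,
    fun _ _ => eq_of_setOf_rel_eq (R := flip inj) h.into_refl_s9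
      fun x y hxy hyx => h.into_antisymm x y hyx hxy⟩

end SDL
end
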